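/- arXiv:1703.02422 — 3 statements merged into one kernel-verified Lean document; each statement's English description precedes it below -/
import Mathlib

section
/- Let A, Ã = A + E ∈ ℂ^{n×n} with A normal, having eigenvalues {λ_i} and {λ̃_i} respectively. Then there exists a permutation π of {1,…,n} such that ∑_{i=1}^n |λ̃_{π(i)} − λ_i|² ≤ ‖E‖_F² + (n−1)δ(E)², where δ(E)² = ‖E‖_F² − (1/n)|tr(E)|². Equivalently, the bound is n‖E‖_F² − ((n−1)/n)|tr(E)|². -/
/-!
Write `A + E = Q T Q*` with `T` upper triangular (Schur) and `A = W D W*` with `D = diag d`, and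
put `V = Q* W`, so that `T - V D V* = Q* E Q`. For each `i` the matrix `K = T i i - V D V*` is
normal, so its `i`-th column and `i`-th row have the same norm, and so do its two off-diagonal
blocks `{b ≤ i < a}` and `{a ≤ i < b}`; since `K` agrees with `Q* E Q` wherever `b ≤ i ≤ a`, this
gives `∑ k, |T i i - d k|² |V i k|² = ‖K eᵢ‖² ≤ ‖E‖_F²`. Summing over `i`, the doubly stochastic
matrix `(|V i k|²)` may be replaced by a permutation matrix (Birkhoff), which gives a matching `π`
with `∑ |λ̃_π(i) - λ_i|² ≤ n ‖E‖_F²`.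

Applied to `A + μ` and `E - μ` with `μ = tr E / n`, this sharpens to the stated bound: the
differences `λ̃_π(i) - λ_i` sum to `tr E = n μ`, so shifting them by `μ` lowers their sum of squares
by exactly `n |μ|²`, while `‖E - μ‖_F² = ‖E‖_F² - n |μ|²`.
-/

open Matrix BigOperators Polynomial

noncomputable def frobSq {n : ℕ} (M : Matrix (Fin n) (Fin n) ℂ) : ℝ :=
  ∑ i, ∑ j, ‖M i j‖ ^ 2

section

variable {ι : Type*} [Fintype ι]

lemma sum_norm_sub_sq_of_sum_eq_card_smul {F : Type*} [NormedAddCommGroup F]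
    [InnerProductSpace ℝ F] {w : ι → F} {μ : F}
    (h : ∑ j, w j = Fintype.card ι • μ) :
    ∑ j, ‖w j - μ‖ ^ 2 = ∑ j, ‖w j‖ ^ 2 - Fintype.card ι * ‖μ‖ ^ 2 := by
  have hinner : ∑ j, inner ℝ (w j) μ = Fintype.card ι * ‖μ‖ ^ 2 := by
    rw [← sum_inner, h, ← Nat.cast_smul_eq_nsmul ℝ, real_inner_smul_left,
      real_inner_self_eq_norm_sq]
  simp only [norm_sub_sq_real, Finset.sum_add_distrib, Finset.sum_sub_distrib,
    ← Finset.mul_sum, hinner, Finset.sum_const, Finset.card_univ, nsmul_eq_mul]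
  ring

namespace Polynomial

lemma roots_prod_univ_X_sub_C (f : ι → ℂ) :
    (∏ i, (X - C (f i))).roots = Finset.univ.val.map f := by
  have := roots_multiset_prod_X_sub_C (Finset.univ.val.map f)
  rwa [Multiset.map_map, Function.comp_def, ← Finset.prod_eq_multiset_prod] at this

lemma exists_perm_of_prod_X_sub_C_eq {a b : ι → ℂ}
    (h : ∏ i, (X - C (a i)) = ∏ i, (X - C (b i))) :
    ∃ σ : Equiv.Perm ι, ∀ i, b i = a (σ i) := by
  have hmap := congrArg roots h
  rw [roots_prod_univ_X_sub_C, roots_prod_univ_X_sub_C] at hmap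
  have hfiber : ∀ z, Fintype.card {i // b i = z} = Fintype.card {i // a i = z} := by
    intro z
    have := congrArg (Multiset.count z) hmap
    simp only [Multiset.count_map, Fintype.card_subtype] at this ⊢
    simpa [Finset.card, Finset.filter_val, eq_comm] using this.symm
  exact ⟨Equiv.ofFiberEquiv fun z => Fintype.equivOfCardEq (hfiber z),
    fun i => (Equiv.ofFiberEquiv_map _ i).symm⟩

end Polynomial

end

namespace Matrix

section

variable {ι : Type*} [Fintype ι]

lemma conjTranspose_mul_self_apply_self (M : Matrix ι ι ℂ) (j : ι) :
    (Mᴴ * M) j j = ((∑ i, ‖M i j‖ ^ 2 : ℝ) : ℂ) := by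
  push_cast
  simp [mul_apply, RCLike.conj_mul]

lemma mul_conjTranspose_self_apply_self (M : Matrix ι ι ℂ) (i : ι) :
    (M * Mᴴ) i i = ((∑ j, ‖M i j‖ ^ 2 : ℝ) : ℂ) := by
  push_cast
  simp [mul_apply, RCLike.mul_conj]

lemma sum_norm_sq_row_eq_col (M : Matrix ι ι ℂ) [IsStarNormal M] (i : ι) :
    ∑ j, ‖M i j‖ ^ 2 = ∑ j, ‖M j i‖ ^ 2 := by
  have h := congr_fun₂ (star_comm_self' M) i i
  rw [star_eq_conjTranspose, conjTranspose_mul_self_apply_self,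
    mul_conjTranspose_self_apply_self] at h
  exact_mod_cast h.symm

lemma trace_conjTranspose_mul_self (M : Matrix ι ι ℂ) :
    (Mᴴ * M).trace = ((∑ i, ∑ j, ‖M i j‖ ^ 2 : ℝ) : ℂ) := by
  simp only [trace, diag, conjTranspose_mul_self_apply_self]
  push_cast
  exact Finset.sum_comm

lemma trace_eq_card_nsmul_trace_div (M : Matrix ι ι ℂ) :
    M.trace = Fintype.card ι • (M.trace / Fintype.card ι) := by
  rcases isEmpty_or_nonempty ι with hι | hι
  · simp [trace]
  · rw [nsmul_eq_mul, mul_div_cancel₀ _ (Nat.cast_ne_zero.2 Fintype.card_ne_zero)]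

variable [DecidableEq ι]

lemma trace_eq_sum_of_charpoly_eq_prod {M : Matrix ι ι ℂ} {lam : ι → ℂ}
    (h : M.charpoly = ∏ i, (X - C (lam i))) : M.trace = ∑ i, lam i := by
  rw [trace_eq_sum_roots_charpoly, h, Polynomial.roots_prod_univ_X_sub_C,
    Finset.sum_eq_multiset_sum]

lemma charpoly_add_smul_one_of_charpoly_eq_prod {M : Matrix ι ι ℂ} {lam : ι → ℂ}
    (h : M.charpoly = ∏ i, (X - C (lam i))) (μ : ℂ) :
    (M + μ • 1).charpoly = ∏ i, (X - C (lam i + μ)) := by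
  have := charpoly_sub_scalar M (-μ)
  rw [scalar_apply, ← smul_one_eq_diagonal, neg_smul, sub_neg_eq_add, h] at this
  rw [this, Polynomial.prod_comp]
  exact Finset.prod_congr rfl fun _ _ => by
    simp only [sub_comp, X_comp, C_comp, C_add, C_neg]; ring

lemma charpoly_unitary_conj {U : Matrix ι ι ℂ} (hU : U ∈ unitaryGroup ι ℂ) (M : Matrix ι ι ℂ) :
    (star U * M * U).charpoly = M.charpoly := by
  rw [charpoly_mul_comm, ← Matrix.mul_assoc, (mem_unitaryGroup_iff).1 hU, Matrix.one_mul]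

lemma sum_norm_sq_unitary_conj {U : Matrix ι ι ℂ} (hU : U ∈ unitaryGroup ι ℂ)
    (M : Matrix ι ι ℂ) :
    ∑ a, ∑ b, ‖(star U * M * U) a b‖ ^ 2 = ∑ a, ∑ b, ‖M a b‖ ^ 2 := by
  apply Complex.ofReal_injective
  rw [← trace_conjTranspose_mul_self, ← trace_conjTranspose_mul_self]
  have hU' : U * star U = 1 := (mem_unitaryGroup_iff).1 hU
  simp only [← star_eq_conjTranspose, star_mul, star_star]
  calc (star U * (star M * U) * (star U * M * U)).trace
      = (star M * (U * star U) * M * (U * star U)).trace := by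
        rw [← trace_mul_cycle]; simp only [Matrix.mul_assoc]
    _ = (star M * M).trace := by simp [hU']

lemma sum_norm_sq_offDiagBlock_eq (M : Matrix ι ι ℂ) [IsStarNormal M] (s : Finset ι) :
    ∑ k ∈ s, ∑ j ∈ sᶜ, ‖M k j‖ ^ 2 = ∑ k ∈ s, ∑ j ∈ sᶜ, ‖M j k‖ ^ 2 := by
  have hrows := Finset.sum_congr rfl fun k (_ : k ∈ s) => sum_norm_sq_row_eq_col M k
  simp only [← Finset.sum_add_sum_compl s, Finset.sum_add_distrib] at hrows
  rw [Finset.sum_comm (s := s) (t := s)] at hrows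
  linarith

instance isStarNormal_diagonal (x : ι → ℂ) : IsStarNormal (diagonal x) :=
  ⟨by simp [Commute, SemiconjBy, star_eq_conjTranspose, diagonal_mul_diagonal, mul_comm]⟩

instance isStarNormal_add_smul_one (M : Matrix ι ι ℂ) [IsStarNormal M] (μ : ℂ) :
    IsStarNormal (M + μ • 1) :=
  Commute.isStarNormal_add <| by
    rw [star_smul, star_one]
    exact (Commute.one_right M).smul_right _

lemma isStarNormal_unitary_conj {U : Matrix ι ι ℂ} (hU : U ∈ unitaryGroup ι ℂ)
    (M : Matrix ι ι ℂ) [IsStarNormal M] : IsStarNormal (U * M * star U) :=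
  IsStarNormal.map (Unitary.conjStarAlgAut ℂ _ ⟨U, hU⟩) M

lemma sum_norm_sq_col_unitary_conj_diagonal {V : Matrix ι ι ℂ} (hV : V ∈ unitaryGroup ι ℂ)
    (x : ι → ℂ) (i : ι) :
    ∑ j, ‖(V * diagonal x * star V) j i‖ ^ 2 = ∑ k, ‖x k‖ ^ 2 * ‖V i k‖ ^ 2 := by
  apply Complex.ofReal_injective
  rw [← conjTranspose_mul_self_apply_self, ← star_eq_conjTranspose]
  have hVV : star V * V = 1 := (mem_unitaryGroup_iff').1 hV
  have : star (V * diagonal x * star V) * (V * diagonal x * star V)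
      = V * diagonal (fun k => ((‖x k‖ ^ 2 : ℝ) : ℂ)) * star V := by
    simp only [star_mul, star_star, Matrix.mul_assoc]
    rw [← Matrix.mul_assoc (star V) V, hVV, Matrix.one_mul, ← Matrix.mul_assoc (star (diagonal x)),
      star_eq_conjTranspose, diagonal_conjTranspose, diagonal_mul_diagonal]
    congr 3
    ext k
    simp [RCLike.conj_mul]
  rw [this]
  push_cast
  simp [mul_apply, diagonal, Finset.sum_ite_eq', mul_right_comm _ _ ((starRingEnd ℂ) _),
    RCLike.mul_conj, mul_comm]

lemma norm_sq_mem_doublyStochastic {U : Matrix ι ι ℂ} (hU : U ∈ unitaryGroup ι ℂ) :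
    of (fun i k => ‖U i k‖ ^ 2) ∈ doublyStochastic ℝ ι := by
  rw [mem_doublyStochastic_iff_sum]
  refine ⟨fun _ _ => sq_nonneg _, fun i => ?_, fun k => ?_⟩
  · have h := mul_conjTranspose_self_apply_self U i
    rw [← star_eq_conjTranspose, (mem_unitaryGroup_iff).1 hU, one_apply_eq] at h
    exact_mod_cast h.symm
  · have h := conjTranspose_mul_self_apply_self U k
    rw [← star_eq_conjTranspose, (mem_unitaryGroup_iff').1 hU, one_apply_eq] at h
    exact_mod_cast h.symm

lemma exists_perm_sum_le_of_mem_doublyStochastic {P : Matrix ι ι ℝ}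
    (hP : P ∈ doublyStochastic ℝ ι) (c : ι → ι → ℝ) :
    ∃ σ : Equiv.Perm ι, ∑ i, c i (σ i) ≤ ∑ i, ∑ k, P i k * c i k := by
  let L : Matrix ι ι ℝ →ₗ[ℝ] ℝ :=
    { toFun := fun M => ∑ i, ∑ k, M i k * c i k
      map_add' := fun M N => by simp [add_mul, Finset.sum_add_distrib]
      map_smul' := fun r M => by simp [Finset.mul_sum, mul_assoc] }
  rw [← SetLike.mem_coe, doublyStochastic_eq_convexHull_permMatrix] at hP
  obtain ⟨_, ⟨σ, rfl⟩, hσ⟩ :=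
    (L.concaveOn convex_univ).exists_le_of_mem_convexHull (Set.subset_univ _) hP
  refine ⟨σ, le_of_eq_of_le ?_ hσ⟩
  simp [L, Equiv.Perm.permMatrix, PEquiv.toMatrix_apply]

lemma sum_norm_sq_sub_smul_one {M : Matrix ι ι ℂ} {μ : ℂ} (hμ : M.trace = Fintype.card ι • μ) :
    ∑ a, ∑ b, ‖(M - μ • 1) a b‖ ^ 2 = ∑ a, ∑ b, ‖M a b‖ ^ 2 - Fintype.card ι * ‖μ‖ ^ 2 := by
  have hrow : ∀ a, ∑ b, ‖(M - μ • 1) a b‖ ^ 2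
      = ∑ b, ‖M a b‖ ^ 2 + (‖M a a - μ‖ ^ 2 - ‖M a a‖ ^ 2) := by
    intro a
    rw [← sub_eq_iff_eq_add', ← Finset.sum_sub_distrib, Finset.sum_eq_single a]
    · simp
    · intro b _ hb
      simp [one_apply_ne hb.symm]
    · simp
  simp only [hrow, Finset.sum_add_distrib, Finset.sum_sub_distrib,
    sum_norm_sub_sq_of_sum_eq_card_smul (w := fun a => M a a) hμ]
  ring

variable [LinearOrder ι]

lemma sum_norm_sq_col_le_of_isStarNormal {K G : Matrix ι ι ℂ} [IsStarNormal K] (i : ι)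
    (hKG : ∀ a b, b ≤ i → i ≤ a → K a b = G a b) :
    ∑ j, ‖K j i‖ ^ 2 ≤ ∑ a, ∑ b, ‖G a b‖ ^ 2 := by
  set s : Finset ι := {b | b ≤ i}
  have hi : i ∉ sᶜ := by simp [s]
  have hrow : ∑ j ∈ sᶜ, ‖K i j‖ ^ 2 ≤ ∑ k ∈ s, ∑ j ∈ sᶜ, ‖K k j‖ ^ 2 :=
    Finset.single_le_sum (f := fun k => ∑ j ∈ sᶜ, ‖K k j‖ ^ 2)
      (fun _ _ => by positivity) (by simp [s])
  calc ∑ j, ‖K j i‖ ^ 2 = ∑ j ∈ s, ‖K i j‖ ^ 2 + ∑ j ∈ sᶜ, ‖K i j‖ ^ 2 := by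
        rw [Finset.sum_add_sum_compl, sum_norm_sq_row_eq_col]
    _ ≤ ∑ j ∈ s, ‖K i j‖ ^ 2 + ∑ k ∈ s, ∑ j ∈ sᶜ, ‖K j k‖ ^ 2 := by
        rw [← sum_norm_sq_offDiagBlock_eq]; gcongr
    _ = ∑ a ∈ insert i sᶜ, ∑ b ∈ s, ‖G a b‖ ^ 2 := by
        rw [Finset.sum_insert hi, Finset.sum_comm (s := s)]
        congr 1
        · refine Finset.sum_congr rfl fun j hj => ?_
          rw [hKG i j (by simpa [s] using hj) le_rfl]
        · refine Finset.sum_congr rfl fun a ha => Finset.sum_congr rfl fun b hb => ?_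
          simp only [s, Finset.mem_compl, Finset.mem_filter, Finset.mem_univ, true_and,
            not_le] at ha hb
          rw [hKG a b hb ha.le]
    _ ≤ ∑ a, ∑ b ∈ s, ‖G a b‖ ^ 2 := Finset.sum_le_univ_sum_of_nonneg fun _ => by positivity
    _ ≤ ∑ a, ∑ b, ‖G a b‖ ^ 2 :=
        Finset.sum_le_sum fun _ _ => Finset.sum_le_univ_sum_of_nonneg fun _ => by positivity

lemma IsUpperTriangular.isDiag_of_isStarNormal {T : Matrix ι ι ℂ} (hT : T.IsUpperTriangular)
    [IsStarNormal T] : T.IsDiag := by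
  suffices ∀ i j, i < j → T i j = 0 from fun i j hij =>
    hij.lt_or_gt.elim (this i j) (fun h => hT h)
  intro i j hij
  set s : Finset ι := {b | b ≤ i}
  have hblock : ∑ k ∈ s, ∑ j ∈ sᶜ, ‖T k j‖ ^ 2 = 0 := by
    rw [sum_norm_sq_offDiagBlock_eq]
    refine Finset.sum_eq_zero fun k hk => Finset.sum_eq_zero fun l hl => ?_
    simp only [s, Finset.mem_compl, Finset.mem_filter, Finset.mem_univ, true_and,
      not_le] at hk hl
    simp [hT (hk.trans_lt hl)]
  have := (Finset.sum_eq_zero_iff_of_nonneg (fun _ _ => by positivity)).1 hblock i (by simp [s])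
  rw [Finset.sum_eq_zero_iff_of_nonneg (fun _ _ => by positivity)] at this
  simpa using this j (by simpa [s] using hij)

lemma sum_norm_sq_diag_sub_mul_le {T V : Matrix ι ι ℂ} (hT : T.IsUpperTriangular)
    (hV : V ∈ unitaryGroup ι ℂ) (d : ι → ℂ) (i : ι) :
    ∑ k, ‖T i i - d k‖ ^ 2 * ‖V i k‖ ^ 2 ≤ ∑ a, ∑ b, ‖(T - V * diagonal d * star V) a b‖ ^ 2 := by
  have hK : V * diagonal (fun k => T i i - d k) * star V = T i i • 1 - V * diagonal d * star V := by
    have : diagonal (fun k => T i i - d k) = T i i • 1 - diagonal d := by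
      rw [← diagonal_sub, ← smul_one_eq_diagonal]
    rw [this, Matrix.mul_sub, Matrix.sub_mul, Matrix.mul_smul, Matrix.mul_one, Matrix.smul_mul,
      (mem_unitaryGroup_iff).1 hV]
  have := isStarNormal_unitary_conj hV (diagonal fun k => T i i - d k)
  rw [← sum_norm_sq_col_unitary_conj_diagonal hV]
  refine sum_norm_sq_col_le_of_isStarNormal i fun a b hb ha => ?_
  rw [hK, sub_apply, sub_apply, smul_apply, smul_eq_mul]
  rcases (hb.trans ha).eq_or_lt with rfl | hlt
  · rw [le_antisymm hb ha, one_apply_eq, mul_one]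
  · rw [hT hlt, one_apply_ne hlt.ne', mul_zero]

lemma exists_perm_sum_norm_sq_diag_sub_le {T V : Matrix ι ι ℂ} (hT : T.IsUpperTriangular)
    (hV : V ∈ unitaryGroup ι ℂ) (d : ι → ℂ) :
    ∃ σ : Equiv.Perm ι, ∑ j, ‖T j j - d (σ j)‖ ^ 2
      ≤ Fintype.card ι * ∑ a, ∑ b, ‖(T - V * diagonal d * star V) a b‖ ^ 2 := by
  obtain ⟨σ, hσ⟩ := exists_perm_sum_le_of_mem_doublyStochastic (norm_sq_mem_doublyStochastic hV)
    fun i k => ‖T i i - d k‖ ^ 2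
  refine ⟨σ, hσ.trans ?_⟩
  calc _ ≤ ∑ _i : ι, ∑ a, ∑ b, ‖(T - V * diagonal d * star V) a b‖ ^ 2 :=
        Finset.sum_le_sum fun i _ => by
          simpa only [of_apply, mul_comm] using sum_norm_sq_diag_sub_mul_le hT hV d i
    _ = _ := by rw [Finset.sum_const, Finset.card_univ, nsmul_eq_mul]

end

section

variable {n : ℕ}

/-- The block-diagonal matrix `1 ⊕ U`. -/
noncomputable def extendOne (U : Matrix (Fin n) (Fin n) ℂ) : Matrix (Fin (n + 1)) (Fin (n + 1)) ℂ :=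
  of fun i j => Fin.cases (Fin.cases 1 0 j) (fun i' => Fin.cases 0 (U i') j) i

@[simp] lemma extendOne_zero_zero (U : Matrix (Fin n) (Fin n) ℂ) : extendOne U 0 0 = 1 := rfl
@[simp] lemma extendOne_zero_succ (U : Matrix (Fin n) (Fin n) ℂ) (j : Fin n) :
    extendOne U 0 j.succ = 0 := rfl
@[simp] lemma extendOne_succ_zero (U : Matrix (Fin n) (Fin n) ℂ) (i : Fin n) :
    extendOne U i.succ 0 = 0 := rfl
@[simp] lemma extendOne_succ_succ (U : Matrix (Fin n) (Fin n) ℂ) (i j : Fin n) :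
    extendOne U i.succ j.succ = U i j := rfl

lemma extendOne_mem_unitaryGroup {U : Matrix (Fin n) (Fin n) ℂ} (hU : U ∈ unitaryGroup (Fin n) ℂ) :
    extendOne U ∈ unitaryGroup (Fin (n + 1)) ℂ := by
  rw [mem_unitaryGroup_iff'] at hU ⊢
  ext i j
  refine Fin.cases ?_ (fun i => ?_) i <;> refine Fin.cases ?_ (fun j => ?_) j
  · simp [mul_apply, Fin.sum_univ_succ]
  · simp [mul_apply, Fin.sum_univ_succ, (Fin.succ_ne_zero j).symm]
  · simp [mul_apply, Fin.sum_univ_succ]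
  · simpa [mul_apply, Fin.sum_univ_succ, one_apply] using congr_fun₂ hU i j

lemma extendOne_conj_apply_succ_zero (U : Matrix (Fin n) (Fin n) ℂ)
    (M : Matrix (Fin (n + 1)) (Fin (n + 1)) ℂ) (i : Fin n) :
    (star (extendOne U) * M * extendOne U) i.succ 0 = ∑ k, star (U k i) * M k.succ 0 := by
  simp [mul_apply, Fin.sum_univ_succ]

lemma extendOne_conj_apply_succ_succ (U : Matrix (Fin n) (Fin n) ℂ)
    (M : Matrix (Fin (n + 1)) (Fin (n + 1)) ℂ) (i j : Fin n) :
    (star (extendOne U) * M * extendOne U) i.succ j.succ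
      = (star U * M.submatrix Fin.succ Fin.succ * U) i j := by
  simp [mul_apply, Fin.sum_univ_succ]

lemma exists_mem_unitaryGroup_col_zero_eq {u : EuclideanSpace ℂ (Fin (n + 1))} (hu : ‖u‖ = 1) :
    ∃ U ∈ unitaryGroup (Fin (n + 1)) ℂ, ∀ k, U k 0 = u k := by
  have hON : Orthonormal ℂ (({0} : Set (Fin (n + 1))).domRestrict fun _ => u) := by
    rw [orthonormal_iff_ite]
    rintro ⟨i, rfl⟩ ⟨j, rfl⟩
    simp [Set.domRestrict, inner_self_eq_norm_sq_to_K, hu]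
  obtain ⟨b, hb⟩ := hON.exists_orthonormalBasis_extension_of_card_eq (by simp)
  refine ⟨(EuclideanSpace.basisFun _ ℂ).toBasis.toMatrix b,
    (EuclideanSpace.basisFun _ ℂ).toMatrix_orthonormalBasis_mem_unitary b, fun k => ?_⟩
  simp [Module.Basis.toMatrix_apply, hb 0 rfl]

lemma exists_mem_unitaryGroup_conj_apply_succ_zero (M : Matrix (Fin (n + 1)) (Fin (n + 1)) ℂ) :
    ∃ U ∈ unitaryGroup (Fin (n + 1)) ℂ, ∀ i : Fin n, (star U * M * U) i.succ 0 = 0 := by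
  obtain ⟨c, hc⟩ := Module.End.exists_eigenvalue (toEuclideanLin M)
  obtain ⟨v, hv⟩ := hc.exists_hasEigenvector
  obtain ⟨u, hu, hMu⟩ : ∃ u : EuclideanSpace ℂ (Fin (n + 1)),
      ‖u‖ = 1 ∧ toEuclideanLin M u = c • u :=
    ⟨_, norm_smul_inv_norm (𝕜 := ℂ) hv.2,
      Module.End.mem_eigenspace_iff.1 (Submodule.smul_mem _ _ hv.1)⟩
  obtain ⟨U, hU, hU0⟩ := exists_mem_unitaryGroup_col_zero_eq hu
  refine ⟨U, hU, fun i => ?_⟩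
  have hcol : ∀ k, (M * U) k 0 = c * U k 0 := fun k => by
    simpa [mul_apply, hU0, mulVec, dotProduct] using congrArg (fun w => w k) hMu
  calc (star U * M * U) i.succ 0 = c * (star U * U) i.succ 0 := by
        simp [Matrix.mul_assoc, mul_apply (M := star U), hcol, Finset.mul_sum, mul_left_comm]
    _ = 0 := by simp [(mem_unitaryGroup_iff').1 hU, one_apply_ne (Fin.succ_ne_zero i)]

theorem exists_mem_unitaryGroup_conj_isUpperTriangular :
    ∀ {n : ℕ} (M : Matrix (Fin n) (Fin n) ℂ),
      ∃ U ∈ unitaryGroup (Fin n) ℂ, (star U * M * U).IsUpperTriangular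
  | 0, _ => ⟨1, one_mem _, fun i => i.elim0⟩
  | n + 1, M => by
    obtain ⟨U₁, hU₁, hcol⟩ := exists_mem_unitaryGroup_conj_apply_succ_zero M
    set M₁ := star U₁ * M * U₁
    obtain ⟨U₂, hU₂, htri⟩ :=
      exists_mem_unitaryGroup_conj_isUpperTriangular (M₁.submatrix Fin.succ Fin.succ)
    refine ⟨U₁ * extendOne U₂, mul_mem hU₁ (extendOne_mem_unitaryGroup hU₂), ?_⟩
    have : star (U₁ * extendOne U₂) * M * (U₁ * extendOne U₂)
        = star (extendOne U₂) * M₁ * extendOne U₂ := by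
      simp only [M₁, star_mul, Matrix.mul_assoc]
    rw [this]
    intro i j hji
    induction i using Fin.cases with
    | zero => exact absurd hji (Fin.not_lt_zero j)
    | succ i =>
      induction j using Fin.cases with
      | zero => simp [extendOne_conj_apply_succ_zero, hcol]
      | succ j =>
        rw [extendOne_conj_apply_succ_succ]
        exact htri (Fin.succ_lt_succ_iff.1 hji)

theorem exists_mem_unitaryGroup_eq_mul_diagonal_mul_star (A : Matrix (Fin n) (Fin n) ℂ)
    [IsStarNormal A] : ∃ W ∈ unitaryGroup (Fin n) ℂ, ∃ d, A = W * diagonal d * star W := by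
  obtain ⟨W, hW, hD⟩ := exists_mem_unitaryGroup_conj_isUpperTriangular A
  have : IsStarNormal (star W * A * W) := by
    simpa using isStarNormal_unitary_conj (Unitary.star_mem hW) A
  refine ⟨W, hW, diag (star W * A * W), ?_⟩
  rw [hD.isDiag_of_isStarNormal.diagonal_diag, ← Matrix.mul_assoc, ← Matrix.mul_assoc,
    (mem_unitaryGroup_iff).1 hW, Matrix.one_mul, Matrix.mul_assoc, (mem_unitaryGroup_iff).1 hW,
    Matrix.mul_one]

theorem exists_perm_sum_norm_sq_eigenvalue_sub_le (A E : Matrix (Fin n) (Fin n) ℂ)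
    [IsStarNormal A] {lam lam' : Fin n → ℂ} (hlam : A.charpoly = ∏ i, (X - C (lam i)))
    (hlam' : (A + E).charpoly = ∏ i, (X - C (lam' i))) :
    ∃ π : Equiv.Perm (Fin n), ∑ i, ‖lam' (π i) - lam i‖ ^ 2 ≤ n * ∑ a, ∑ b, ‖E a b‖ ^ 2 := by
  obtain ⟨W, hW, d, rfl⟩ := exists_mem_unitaryGroup_eq_mul_diagonal_mul_star A
  obtain ⟨Q, hQ, hT⟩ := exists_mem_unitaryGroup_conj_isUpperTriangular (W * diagonal d * star W + E)
  set T := star Q * (W * diagonal d * star W + E) * Q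
  obtain ⟨σ, hσ⟩ := exists_perm_sum_norm_sq_diag_sub_le hT (mul_mem (Unitary.star_mem hQ) hW) d
  have hTE : T - star Q * W * diagonal d * star (star Q * W) = star Q * E * Q := by
    simp only [T, star_mul, star_star, Matrix.mul_add, Matrix.add_mul, Matrix.mul_assoc]
    abel
  rw [hTE, sum_norm_sq_unitary_conj hQ, Fintype.card_fin] at hσ
  have hTlam' : ∏ j, (X - C (T j j)) = ∏ i, (X - C (lam' i)) := by
    rw [← hlam', ← charpoly_of_isUpperTriangular T hT, charpoly_unitary_conj hQ]
  have hdlam : ∏ k, (X - C (d k)) = ∏ i, (X - C (lam i)) := by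
    rw [← hlam, ← charpoly_diagonal]
    simpa using (charpoly_unitary_conj (Unitary.star_mem hW) (diagonal d)).symm
  obtain ⟨α, hα⟩ := Polynomial.exists_perm_of_prod_X_sub_C_eq hTlam'
  obtain ⟨β, hβ⟩ := Polynomial.exists_perm_of_prod_X_sub_C_eq hdlam
  refine ⟨β.trans (σ.symm.trans α.symm), le_of_eq_of_le ?_ hσ⟩
  simp only [Equiv.trans_apply, hα, hβ, Equiv.apply_symm_apply]
  rw [Equiv.sum_comp β (fun k => ‖T (σ.symm k) (σ.symm k) - d k‖ ^ 2), ← Equiv.sum_comp σ]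
  simp

end

end Matrix

theorem stmt9_general {n : ℕ} (A E : Matrix (Fin n) (Fin n) ℂ)
    (hA : A * A.conjTranspose = A.conjTranspose * A)
    (lam lam' : Fin n → ℂ)
    (hlam : A.charpoly = ∏ i, (X - C (lam i)))
    (hlam' : (A + E).charpoly = ∏ i, (X - C (lam' i))) :
    ∃ π : Equiv.Perm (Fin n),
      ∑ i, ‖lam' (π i) - lam i‖ ^ 2 ≤
        (n : ℝ) * frobSq E - (((n : ℝ) - 1) / n) * ‖E.trace‖ ^ 2 := by
  have : IsStarNormal A := ⟨hA.symm⟩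
  set μ := E.trace / n
  have hμ : E.trace = Fintype.card (Fin n) • μ := by
    simpa only [Fintype.card_fin] using trace_eq_card_nsmul_trace_div E
  obtain ⟨π, hπ⟩ := exists_perm_sum_norm_sq_eigenvalue_sub_le (A + μ • 1) (E - μ • 1)
    (charpoly_add_smul_one_of_charpoly_eq_prod hlam μ) (by rwa [add_add_sub_cancel])
  have hsum : ∑ i, (lam' (π i) - lam i) = Fintype.card (Fin n) • μ := by
    rw [Finset.sum_sub_distrib, Equiv.sum_comp π lam', ← trace_eq_sum_of_charpoly_eq_prod hlam',
      ← trace_eq_sum_of_charpoly_eq_prod hlam, trace_add, ← hμ, add_sub_cancel_left]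
  have hcentered := sum_norm_sub_sq_of_sum_eq_card_smul hsum
  rw [sum_norm_sq_sub_smul_one hμ] at hπ
  simp only [sub_sub, Fintype.card_fin] at hcentered hπ
  have htr : ‖E.trace‖ = n * ‖μ‖ := by
    rw [hμ, Fintype.card_fin, nsmul_eq_mul, norm_mul, Complex.norm_natCast]
  have hcoef : ((n : ℝ) - 1) / n * ‖E.trace‖ ^ 2 = (n - 1) * n * ‖μ‖ ^ 2 := by
    rcases eq_or_ne n 0 with rfl | hn
    · simp
    · rw [htr]; field_simp
  refine ⟨π, ?_⟩
  rw [hcoef]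
  unfold frobSq
  linarith

theorem stmt9 {n : ℕ} (hn : 1 ≤ n) (A E : Matrix (Fin n) (Fin n) ℂ)
    (hA : A * A.conjTranspose = A.conjTranspose * A)
    (lam lam' : Fin n → ℂ)
    (hlam : A.charpoly = ∏ i, (X - C (lam i)))
    (hlam' : (A + E).charpoly = ∏ i, (X - C (lam' i))) :
    ∃ π : Equiv.Perm (Fin n),
      ∑ i, ‖lam' (π i) - lam i‖ ^ 2 ≤
        (n : ℝ) * frobSq E - (((n : ℝ) - 1) / n) * ‖E.trace‖ ^ 2 :=
  stmt9_general A E hA lam lam' hlam hlam'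
end

section
/- Let A ∈ ℂ^{n×n} be Hermitian with eigenvalues {λ_i}, and Ã = A + E with eigenvalues {λ̃_i}. Then there exists a permutation π of {1,…,n} such that ∑_{i=1}^n |λ̃_{π(i)} − λ_i|² ≤ ‖E‖_F² + δ(E)², where δ(E)² = ‖E‖_F² − (1/n)|tr(E)|². -/
/-!
Triangularize `A + E` unitarily (Schur): `U* (A + E) U = H + G` is upper triangular, with
`H = U* A U` Hermitian and `G = U* E U`, so its diagonal `d` lists the `λ̃`. Conjugating by the
unitary `W = V* U`, with `V` an eigenbasis of `A`, shows that `‖H - diag d‖_F²` equals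
`∑ |W_ij|² |d_j - λ_i|²`; the weights `|W_ij|²` form a doubly stochastic matrix, so by Birkhoff's
theorem some permutation does at least as well. Below the diagonal `H = -G`, and above it `H` is
the conjugate transpose of that part, so `‖H - diag d‖_F² ≤ 2‖G‖_F² - ∑ |G_ii|²`; finally
`‖G‖_F = ‖E‖_F` and Cauchy–Schwarz gives `∑ |G_ii|² ≥ |tr G|² / n = |tr E|² / n`.
-/

open Matrix BigOperators Polynomial

noncomputable def deltaSq {n : ℕ} (M : Matrix (Fin n) (Fin n) ℂ) : ℝ :=
  frobSq M - (1 / (n : ℝ)) * ‖M.trace‖ ^ 2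

theorem Equiv.Perm.exists_apply_eq_of_map_univ_eq {ι α : Type*} [Fintype ι] {f g : ι → α}
    (h : Finset.univ.val.map f = Finset.univ.val.map g) :
    ∃ σ : Equiv.Perm ι, ∀ i, g (σ i) = f i := by
  classical
  have hcard : ∀ a, Fintype.card {i // f i = a} = Fintype.card {i // g i = a} := fun a => by
    simpa [Fintype.card_subtype, Multiset.count_map, eq_comm, Finset.card, Finset.filter_val]
      using congrArg (Multiset.count a) h
  let e : (Σ a, {i // f i = a}) ≃ Σ a, {i // g i = a} :=
    Equiv.sigmaCongrRight fun a => Fintype.equivOfCardEq (hcard a)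
  exact ⟨(Equiv.sigmaFiberEquiv f).symm.trans (e.trans (Equiv.sigmaFiberEquiv g)),
    fun i => (e ⟨f i, i, rfl⟩).2.2⟩

theorem Polynomial.exists_perm_apply_eq_of_prod_X_sub_C_eq {ι R : Type*} [Fintype ι] [CommRing R]
    [IsDomain R] {f g : ι → R} (h : ∏ i, (X - C (f i)) = ∏ i, (X - C (g i))) :
    ∃ σ : Equiv.Perm ι, ∀ i, g (σ i) = f i := by
  have hroots : ∀ f : ι → R, (∏ i, (X - C (f i))).roots = Finset.univ.val.map f := fun f => by
    simpa using roots_multiset_prod_X_sub_C (Finset.univ.val.map f)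
  exact Equiv.Perm.exists_apply_eq_of_map_univ_eq (by simpa only [hroots] using congrArg roots h)

theorem exists_perm_sum_le_of_mem_doublyStochastic {n : Type*} [Fintype n] [DecidableEq n]
    {D : Matrix n n ℝ} (hD : D ∈ doublyStochastic ℝ n) (c : n → n → ℝ) :
    ∃ σ : Equiv.Perm n, ∑ i, c i (σ i) ≤ ∑ i, ∑ j, D i j * c i j := by
  let φ : Matrix n n ℝ →ₗ[ℝ] ℝ :=
    { toFun := fun M => ∑ i, ∑ j, M i j * c i j
      map_add' := fun M N => by simp [add_mul, Finset.sum_add_distrib]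
      map_smul' := fun r M => by simp [Finset.mul_sum, mul_assoc] }
  rw [← SetLike.mem_coe, doublyStochastic_eq_convexHull_permMatrix] at hD
  obtain ⟨_, ⟨σ, rfl⟩, hσ⟩ :=
    (φ.concaveOn convex_univ).exists_le_of_mem_convexHull (Set.subset_univ _) hD
  refine ⟨σ, le_of_eq_of_le ?_ hσ⟩
  simp [φ, Equiv.Perm.permMatrix, PEquiv.toMatrix_apply, ite_mul]

theorem Matrix.norm_sq_apply_mem_doublyStochastic {m : Type*} [Fintype m] [DecidableEq m]
    {W : Matrix m m ℂ} (hW : W ∈ unitaryGroup m ℂ) :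
    (of fun i j => ‖W i j‖ ^ 2) ∈ doublyStochastic ℝ m := by
  refine mem_doublyStochastic_iff_sum.mpr ⟨fun i j => sq_nonneg _, fun i => ?_, fun j => ?_⟩
  · have h : (W * star W) i i = 1 := by rw [Unitary.mul_star_self_of_mem hW, one_apply_eq]
    simp only [mul_apply, star_apply, RCLike.star_def, Complex.mul_conj,
      Complex.normSq_eq_norm_sq] at h
    exact_mod_cast h
  · have h : (star W * W) j j = 1 := by rw [Unitary.star_mul_self_of_mem hW, one_apply_eq]
    simp only [mul_apply, star_apply, RCLike.star_def, Complex.conj_mul'] at h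
    exact_mod_cast h

theorem Matrix.trace_star_mul_mul_of_mem_unitaryGroup {m R : Type*} [Fintype m] [DecidableEq m]
    [CommRing R] [StarRing R] {U : Matrix m m R} (hU : U ∈ unitaryGroup m R) (M : Matrix m m R) :
    (star U * M * U).trace = M.trace := by
  rw [trace_mul_comm, ← Matrix.mul_assoc, Unitary.mul_star_self_of_mem hU, Matrix.one_mul]

theorem Matrix.charpoly_star_mul_mul_of_mem_unitaryGroup {m R : Type*} [Fintype m]
    [DecidableEq m] [CommRing R] [StarRing R] {U : Matrix m m R} (hU : U ∈ unitaryGroup m R)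
    (M : Matrix m m R) : (star U * M * U).charpoly = M.charpoly := by
  rw [charpoly_mul_comm, ← Matrix.mul_assoc, Unitary.mul_star_self_of_mem hU, Matrix.one_mul]

theorem Matrix.norm_sq_sub_diagonal_apply_le {m : Type*} [LinearOrder m] {H G : Matrix m m ℂ}
    (hH : H.IsHermitian) (hT : (H + G).IsUpperTriangular) (i j : m) :
    ‖(H - diagonal fun k => (H + G) k k) i j‖ ^ 2
      ≤ ‖G i j‖ ^ 2 + ‖G j i‖ ^ 2 - if i = j then ‖G i i‖ ^ 2 else 0 := by
  have hlow : ∀ {i j}, j < i → H i j = -G i j := fun hji => eq_neg_of_add_eq_zero_left (hT hji)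
  rcases lt_trichotomy i j with hij | rfl | hji
  · rw [sub_apply, diagonal_apply_ne _ hij.ne, sub_zero, ← hH.apply, hlow hij, if_neg hij.ne]
    simp
  · simp
  · rw [sub_apply, diagonal_apply_ne _ hji.ne', sub_zero, hlow hji, if_neg hji.ne']
    simp

theorem exists_orthonormalBasis_inner_apply_eq_zero_of_lt {V : Type*} [NormedAddCommGroup V]
    [InnerProductSpace ℂ V] [FiniteDimensional ℂ V] {n : ℕ} (hn : Module.finrank ℂ V = n)
    (f : Module.End ℂ V) :
    ∃ b : OrthonormalBasis (Fin n) ℂ V, ∀ i j, j < i → inner ℂ (b i) (f (b j)) = 0 := by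
  induction n generalizing V with
  | zero => exact ⟨(stdOrthonormalBasis ℂ V).reindex (finCongr hn), fun i => i.elim0⟩
  | succ n ih =>
    have : Nontrivial V := Module.finrank_pos_iff (R := ℂ) |>.mp (by omega)
    obtain ⟨μ, hμ⟩ := f.exists_eigenvalue
    obtain ⟨v₀, hv₀⟩ := hμ.exists_hasEigenvector
    set v : V := (‖v₀‖⁻¹ : ℂ) • v₀
    have hv : ‖v‖ = 1 := norm_smul_inv_norm hv₀.right
    have hfv : f v = μ • v := by rw [map_smul, hv₀.apply_eq_smul, smul_comm]
    set K := (ℂ ∙ v)ᗮ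
    have : Fact (Module.finrank ℂ V = n + 1) := ⟨hn⟩
    obtain ⟨b', hb'⟩ := ih (Submodule.finrank_orthogonal_span_singleton
      (ne_zero_of_norm_ne_zero (hv.trans_ne one_ne_zero)))
      (K.orthogonalProjectionOnto.toLinearMap ∘ₗ f ∘ₗ K.subtype)
    have hon : Orthonormal ℂ (vecCons v fun i => (b' i : V)) :=
      orthonormal_vecCons_iff.mpr ⟨hv,
        fun i => Submodule.mem_orthogonal_singleton_iff_inner_right.mp (b' i).2,
        b'.orthonormal.comp_linearIsometry K.subtypeₗᵢ⟩
    refine ⟨OrthonormalBasis.mk hon (hon.linearIndependent.span_eq_top_of_card_eq_finrank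
      (by simp [hn])).ge, ?_⟩
    simp only [OrthonormalBasis.coe_mk]
    intro i j hji
    induction i using Fin.cases with
    | zero => exact absurd hji (Fin.not_lt_zero j)
    | succ i =>
      induction j using Fin.cases with
      | zero => simp [hfv, Submodule.mem_orthogonal_singleton_iff_inner_left.mp (b' i).2]
      | succ j =>
        rw [cons_val_succ, cons_val_succ, ← K.inner_orthogonalProjectionOnto_eq_of_mem_left]
        exact hb' i j (Fin.succ_lt_succ_iff.mp hji)

theorem Matrix.exists_mem_unitaryGroup_isUpperTriangular {n : ℕ}
    (M : Matrix (Fin n) (Fin n) ℂ) :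
    ∃ U ∈ unitaryGroup (Fin n) ℂ, (star U * M * U).IsUpperTriangular := by
  obtain ⟨b, hb⟩ := exists_orthonormalBasis_inner_apply_eq_zero_of_lt
    (finrank_euclideanSpace_fin (𝕜 := ℂ)) (toEuclideanLin M)
  let e := EuclideanSpace.basisFun (Fin n) ℂ
  refine ⟨e.toBasis.toMatrix b, e.toMatrix_orthonormalBasis_mem_unitary b, fun i j hji => ?_⟩
  have hentry : (star (e.toBasis.toMatrix b) * M * e.toBasis.toMatrix b) i j
      = inner ℂ (b i) (toEuclideanLin M (b j)) := by
    simp only [e, mul_apply, Module.Basis.toMatrix_apply, OrthonormalBasis.coe_toBasis_repr_apply,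
      EuclideanSpace.basisFun_repr, star_apply, RCLike.star_def, PiLp.inner_apply, toLpLin_apply,
      mulVec, dotProduct, RCLike.inner_apply, Finset.sum_mul]
    rw [Finset.sum_comm]
    exact Finset.sum_congr rfl fun _ _ => Finset.sum_congr rfl fun _ _ => by ring
  rw [hentry, hb i j hji]

section Frobenius

variable {n : ℕ}

theorem frobSq_eq_re_trace (M : Matrix (Fin n) (Fin n) ℂ) :
    frobSq M = RCLike.re (Mᴴ * M).trace := by
  simp [frobSq, trace, mul_apply, ← Complex.normSq_eq_norm_sq, Complex.normSq_apply]
  exact Finset.sum_comm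

theorem frobSq_unitary_mul {W : Matrix (Fin n) (Fin n) ℂ} (hW : W ∈ unitaryGroup (Fin n) ℂ)
    (M : Matrix (Fin n) (Fin n) ℂ) : frobSq (W * M) = frobSq M := by
  have hW' : Wᴴ * W = 1 := Unitary.star_mul_self_of_mem hW
  rw [frobSq_eq_re_trace, frobSq_eq_re_trace, conjTranspose_mul, Matrix.mul_assoc,
    ← Matrix.mul_assoc Wᴴ, hW', Matrix.one_mul]

theorem frobSq_mul_unitary {W : Matrix (Fin n) (Fin n) ℂ} (hW : W ∈ unitaryGroup (Fin n) ℂ)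
    (M : Matrix (Fin n) (Fin n) ℂ) : frobSq (M * W) = frobSq M := by
  have hW' : W * Wᴴ = 1 := Unitary.mul_star_self_of_mem hW
  rw [frobSq_eq_re_trace, frobSq_eq_re_trace, conjTranspose_mul, Matrix.mul_assoc,
    trace_mul_comm, Matrix.mul_assoc, Matrix.mul_assoc, hW', Matrix.mul_one]

theorem frobSq_star_mul_mul {U : Matrix (Fin n) (Fin n) ℂ} (hU : U ∈ unitaryGroup (Fin n) ℂ)
    (M : Matrix (Fin n) (Fin n) ℂ) : frobSq (star U * M * U) = frobSq M := by
  rw [frobSq_mul_unitary hU, frobSq_unitary_mul (Unitary.star_mem hU)]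

theorem one_div_mul_norm_trace_sq_le (M : Matrix (Fin n) (Fin n) ℂ) :
    1 / (n : ℝ) * ‖M.trace‖ ^ 2 ≤ ∑ i, ‖M i i‖ ^ 2 := by
  rcases n.eq_zero_or_pos with rfl | hn
  · simp
  have htr : ‖M.trace‖ ^ 2 ≤ (∑ i, ‖M i i‖) ^ 2 := by
    gcongr
    exact norm_sum_le _ _
  have hcs := sq_sum_le_card_mul_sum_sq (s := Finset.univ) (f := fun i => ‖M i i‖)
  rw [Finset.card_univ, Fintype.card_fin] at hcs
  rw [div_mul_eq_mul_div, one_mul, div_le_iff₀ (by positivity)]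
  linarith

theorem frobSq_sub_diagonal_le {H G : Matrix (Fin n) (Fin n) ℂ}
    (hH : H.IsHermitian) (hT : (H + G).IsUpperTriangular) :
    frobSq (H - diagonal fun k => (H + G) k k) ≤ 2 * frobSq G - ∑ i, ‖G i i‖ ^ 2 := by
  calc frobSq (H - diagonal fun k => (H + G) k k)
      ≤ ∑ i, ∑ j, (‖G i j‖ ^ 2 + ‖G j i‖ ^ 2 - if i = j then ‖G i i‖ ^ 2 else 0) :=
        Finset.sum_le_sum fun i _ => Finset.sum_le_sum fun j _ =>
          norm_sq_sub_diagonal_apply_le hH hT i j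
    _ = 2 * frobSq G - ∑ i, ‖G i i‖ ^ 2 := by
        simp only [Finset.sum_sub_distrib, Finset.sum_add_distrib, Finset.sum_ite_eq,
          Finset.mem_univ, if_true, frobSq]
        rw [Finset.sum_comm (f := fun i j => ‖G j i‖ ^ 2)]
        ring

theorem Matrix.IsHermitian.exists_perm_sum_norm_sq_le_frobSq {A : Matrix (Fin n) (Fin n) ℂ}
    (hA : A.IsHermitian) {U : Matrix (Fin n) (Fin n) ℂ} (hU : U ∈ unitaryGroup (Fin n) ℂ)
    (d : Fin n → ℂ) :
    ∃ σ : Equiv.Perm (Fin n),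
      ∑ i, ‖d (σ i) - hA.eigenvalues i‖ ^ 2 ≤ frobSq (star U * A * U - diagonal d) := by
  let V : Matrix (Fin n) (Fin n) ℂ := hA.eigenvectorUnitary
  let μ : Fin n → ℂ := fun i => hA.eigenvalues i
  let W := star V * U
  have hW : W ∈ unitaryGroup (Fin n) ℂ :=
    Submonoid.mul_mem _ (Unitary.star_mem hA.eigenvectorUnitary.2) hU
  have hdiag : star V * A * V = diagonal μ := by
    have h := hA.conjStarAlgAut_star_eigenvectorUnitary
    simp only [Unitary.conjStarAlgAut_apply, Unitary.coe_star, star_star] at h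
    exact h
  have hWA : W * (star U * A * U) = diagonal μ * W := calc
    W * (star U * A * U) = star V * (U * star U) * A * U := by simp only [W, Matrix.mul_assoc]
    _ = star V * A * (V * star V) * U := by
      rw [Unitary.mul_star_self_of_mem hU, Unitary.mul_star_self_of_mem hA.eigenvectorUnitary.2,
        Matrix.mul_one, Matrix.mul_one]
    _ = diagonal μ * W := by simp only [← hdiag, W, Matrix.mul_assoc]
  have hentry : W * (star U * A * U - diagonal d) = of fun i j => (μ i - d j) * W i j := by
    ext i j
    rw [Matrix.mul_sub, hWA, sub_apply, diagonal_mul, mul_diagonal, of_apply]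
    ring
  obtain ⟨σ, hσ⟩ := exists_perm_sum_le_of_mem_doublyStochastic
    (norm_sq_apply_mem_doublyStochastic hW) fun i j => ‖d j - μ i‖ ^ 2
  refine ⟨σ, hσ.trans_eq ?_⟩
  rw [← frobSq_unitary_mul hW, hentry, frobSq]
  simp [mul_pow, norm_sub_rev, mul_comm]

end Frobenius

theorem stmt10_general {n : ℕ} (A E : Matrix (Fin n) (Fin n) ℂ)
    (hA : A.conjTranspose = A)
    (lam lam' : Fin n → ℂ)
    (hlam : A.charpoly = ∏ i, (X - C (lam i)))
    (hlam' : (A + E).charpoly = ∏ i, (X - C (lam' i))) :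
    ∃ π : Equiv.Perm (Fin n),
      ∑ i, ‖lam' (π i) - lam i‖ ^ 2 ≤ frobSq E + deltaSq E := by
  have hHerm : A.IsHermitian := hA
  obtain ⟨U, hU, hT⟩ := (A + E).exists_mem_unitaryGroup_isUpperTriangular
  set H := star U * A * U
  set G := star U * E * U
  have hHG : star U * (A + E) * U = H + G := by rw [Matrix.mul_add, Matrix.add_mul]
  rw [hHG] at hT
  have hH : H.IsHermitian := isHermitian_conjTranspose_mul_mul U hHerm
  obtain ⟨σ, hσ⟩ := hHerm.exists_perm_sum_norm_sq_le_frobSq hU fun k => (H + G) k k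
  obtain ⟨ρ, hρ⟩ := exists_perm_apply_eq_of_prod_X_sub_C_eq (hHerm.charpoly_eq.symm.trans hlam)
  obtain ⟨τ, hτ⟩ := exists_perm_apply_eq_of_prod_X_sub_C_eq <|
    (charpoly_of_isUpperTriangular _ hT).symm.trans <|
      (hHG ▸ charpoly_star_mul_mul_of_mem_unitaryGroup hU (A + E)).trans hlam'
  refine ⟨ρ.symm.trans (σ.trans τ), ?_⟩
  calc ∑ i, ‖lam' (τ (σ (ρ.symm i))) - lam i‖ ^ 2
      = ∑ i, ‖(H + G) (σ i) (σ i) - hHerm.eigenvalues i‖ ^ 2 := by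
        rw [← Equiv.sum_comp ρ]
        simp [hρ, hτ]
    _ ≤ frobSq (H - diagonal fun k => (H + G) k k) := hσ
    _ ≤ 2 * frobSq G - ∑ i, ‖G i i‖ ^ 2 := frobSq_sub_diagonal_le hH hT
    _ ≤ frobSq E + deltaSq E := by
        have htr := one_div_mul_norm_trace_sq_le G
        rw [trace_star_mul_mul_of_mem_unitaryGroup hU] at htr
        rw [frobSq_star_mul_mul hU, deltaSq]
        linarith

theorem stmt10 {n : ℕ} (hn : 1 ≤ n) (A E : Matrix (Fin n) (Fin n) ℂ)
    (hA : A.conjTranspose = A)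
    (lam lam' : Fin n → ℂ)
    (hlam : A.charpoly = ∏ i, (X - C (lam i)))
    (hlam' : (A + E).charpoly = ∏ i, (X - C (lam' i))) :
    ∃ π : Equiv.Perm (Fin n),
      ∑ i, ‖lam' (π i) - lam i‖ ^ 2 ≤ frobSq E + deltaSq E :=
  stmt10_general A E hA lam lam' hlam hlam'
end

section
/- Suppose ‖E_Q‖_F < 1 and n ≥ 1. Then n·(δ(E_Q)²/‖E_Q‖_F²)·‖E_Q‖_F^{2/m} + (1/n)|tr(E)|² ≤ n·‖E_Q‖_F^{2/m}, where δ(E_Q)² = ‖E_Q‖_F² − (1/n)|tr(E)|². Consequently, n(n−p+2√(n−p)δ(E_Q)+δ(E_Q)²/‖E_Q‖_F²)‖E_Q‖_F^{2/m} + (1/n)|tr(E)|² ≤ n(√(n−p)+1)²‖E_Q‖_F^{2/m}, i.e., the new bound of Theorem 3.1 is at most Song's bound n(√(n−p)+1)²‖E_Q‖_F^{2/m} when ‖E_Q‖_F < 1. -/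
open Matrix BigOperators

noncomputable def frobNorm {n : ℕ} (M : Matrix (Fin n) (Fin n) ℂ) : ℝ :=
  Real.sqrt (frobSq M)

noncomputable def delta {n : ℕ} (M : Matrix (Fin n) (Fin n) ℂ) : ℝ :=
  Real.sqrt (deltaSq M)

/-!
Write `F = ‖E_Q‖_F`, `a = F^{2/m}` and `T = |tr E|² / n`, so that `δ(E_Q)² = F² - T`.
Since `F < 1` and `2/m ≤ 2` we have `F² ≤ a`, hence `T ≤ n T a / F²`, which is the first
inequality. The second follows from it because `δ(E_Q) ≤ ‖E_Q‖_F < 1` gives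
`(n - p) + 2 √(n - p) δ(E_Q) + 1 ≤ (√(n - p) + 1)²`.
-/

section Real

lemma sq_le_rpow_of_le_one {x t : ℝ} (hx0 : 0 < x) (hx1 : x ≤ 1) (ht : t ≤ 2) :
    x ^ 2 ≤ x ^ t := by
  simpa only [Real.rpow_two] using Real.rpow_le_rpow_of_exponent_ge hx0 hx1 ht

lemma mul_sub_div_mul_add_le {n s a T : ℝ} (hn : 1 ≤ n) (hs : 0 < s) (hsa : s ≤ a)
    (hT : 0 ≤ T) : n * ((s - T) / s) * a + T ≤ n * a := by
  have hT_le : T ≤ n * (T / s) * a := by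
    calc T = 1 * 1 * T := by ring
      _ ≤ n * (a / s) * T := by
          gcongr
          exact (one_le_div hs).mpr hsa
      _ = n * (T / s) * a := by ring
  calc n * ((s - T) / s) * a + T
      ≤ n * ((s - T) / s) * a + n * (T / s) * a := by gcongr
    _ = n * a := by field_simp; ring

lemma add_two_mul_sqrt_mul_add_one_le (x : ℝ) {c : ℝ} (hc : c ≤ 1) :
    x + 2 * √x * c + 1 ≤ (√x + 1) ^ 2 := by
  have hx : x ≤ √x ^ 2 := Real.sq_sqrt' (x := x) ▸ le_max_left x 0
  nlinarith [mul_nonneg (Real.sqrt_nonneg x) (sub_nonneg.mpr hc)]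

end Real

section Frobenius

variable {n : ℕ} (M : Matrix (Fin n) (Fin n) ℂ)

lemma frobSq_nonneg : 0 ≤ frobSq M := by
  unfold frobSq
  positivity

lemma frobSq_pos {M : Matrix (Fin n) (Fin n) ℂ} (hM : M ≠ 0) : 0 < frobSq M := by
  obtain ⟨i, j, hij⟩ : ∃ i j, M i j ≠ 0 := by
    by_contra! h
    exact hM (Matrix.ext h)
  calc 0 < ‖M i j‖ ^ 2 := by positivity
    _ ≤ ∑ j, ‖M i j‖ ^ 2 :=
        Finset.single_le_sum (fun j _ => sq_nonneg ‖M i j‖) (Finset.mem_univ j)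
    _ ≤ frobSq M :=
        Finset.single_le_sum (f := fun i => ∑ j, ‖M i j‖ ^ 2) (fun i _ => by positivity)
          (Finset.mem_univ i)

lemma frobNorm_pos {M : Matrix (Fin n) (Fin n) ℂ} (hM : M ≠ 0) : 0 < frobNorm M :=
  Real.sqrt_pos.mpr (frobSq_pos hM)

lemma frobNorm_sq : frobNorm M ^ 2 = frobSq M :=
  Real.sq_sqrt (frobSq_nonneg M)

lemma deltaSq_eq : deltaSq M = frobNorm M ^ 2 - (1 / (n : ℝ)) * ‖M.trace‖ ^ 2 := by
  rw [deltaSq, frobNorm_sq]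

lemma delta_le_frobNorm : delta M ≤ frobNorm M := by
  apply Real.sqrt_le_sqrt
  rw [deltaSq]
  have : 0 ≤ (1 / (n : ℝ)) * ‖M.trace‖ ^ 2 := by positivity
  linarith

end Frobenius

theorem stmt11_general {n : ℕ} (hn : 1 ≤ n) (p : ℕ)
    (m : ℕ) (hm : 1 ≤ m)
    (EQ E : Matrix (Fin n) (Fin n) ℂ) (hEQ : EQ ≠ 0)
    (htr : EQ.trace = E.trace) (hf : frobNorm EQ < 1) :
    (n : ℝ) * (deltaSq EQ / frobNorm EQ ^ 2) * frobNorm EQ ^ ((2 : ℝ) / m) +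
        (1 / (n : ℝ)) * ‖E.trace‖ ^ 2 ≤
      (n : ℝ) * frobNorm EQ ^ ((2 : ℝ) / m) ∧
    (n : ℝ) * (((n : ℝ) - p) + 2 * Real.sqrt ((n : ℝ) - p) * delta EQ +
          deltaSq EQ / frobNorm EQ ^ 2) * frobNorm EQ ^ ((2 : ℝ) / m) +
        (1 / (n : ℝ)) * ‖E.trace‖ ^ 2 ≤
      (n : ℝ) * (Real.sqrt ((n : ℝ) - p) + 1) ^ 2 * frobNorm EQ ^ ((2 : ℝ) / m) := by
  set a := frobNorm EQ ^ ((2 : ℝ) / m)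
  set T := (1 / (n : ℝ)) * ‖E.trace‖ ^ 2
  have hF : 0 < frobNorm EQ := frobNorm_pos hEQ
  have hn' : (1 : ℝ) ≤ n := by exact_mod_cast hn
  have hFa : frobNorm EQ ^ 2 ≤ a :=
    sq_le_rpow_of_le_one hF hf.le (div_le_self zero_le_two (by exact_mod_cast hm))
  have first : (n : ℝ) * (deltaSq EQ / frobNorm EQ ^ 2) * a + T ≤ n * a := by
    rw [deltaSq_eq, htr]
    exact mul_sub_div_mul_add_le hn' (by positivity) hFa (by positivity)
  refine ⟨first, ?_⟩
  have hδ : delta EQ ≤ 1 := (delta_le_frobNorm EQ).trans hf.le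
  have hna : 0 ≤ (n : ℝ) * a := by positivity
  calc (n : ℝ) * ((n - p) + 2 * √(n - p) * delta EQ + deltaSq EQ / frobNorm EQ ^ 2) * a + T
      = n * ((n - p) + 2 * √(n - p) * delta EQ) * a
          + ((n : ℝ) * (deltaSq EQ / frobNorm EQ ^ 2) * a + T) := by ring
    _ ≤ n * ((n - p) + 2 * √(n - p) * delta EQ) * a + n * a := by gcongr
    _ = ((n - p) + 2 * √(n - p) * delta EQ + 1) * (n * a) := by ring
    _ ≤ (√(n - p) + 1) ^ 2 * (n * a) := by
        gcongr
        exact add_two_mul_sqrt_mul_add_one_le _ hδ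
    _ = n * (√(n - p) + 1) ^ 2 * a := by ring

theorem stmt11 {n : ℕ} (hn : 1 ≤ n) (p : ℕ) (hp : 1 ≤ p) (hpn : p ≤ n)
    (m : ℕ) (hm : 1 ≤ m)
    (EQ E : Matrix (Fin n) (Fin n) ℂ) (hEQ : EQ ≠ 0)
    (htr : EQ.trace = E.trace) (hf : frobNorm EQ < 1) :
    (n : ℝ) * (deltaSq EQ / frobNorm EQ ^ 2) * frobNorm EQ ^ ((2 : ℝ) / m) +
        (1 / (n : ℝ)) * ‖E.trace‖ ^ 2 ≤
      (n : ℝ) * frobNorm EQ ^ ((2 : ℝ) / m) ∧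
    (n : ℝ) * (((n : ℝ) - p) + 2 * Real.sqrt ((n : ℝ) - p) * delta EQ +
          deltaSq EQ / frobNorm EQ ^ 2) * frobNorm EQ ^ ((2 : ℝ) / m) +
        (1 / (n : ℝ)) * ‖E.trace‖ ^ 2 ≤
      (n : ℝ) * (Real.sqrt ((n : ℝ) - p) + 1) ^ 2 * frobNorm EQ ^ ((2 : ℝ) / m) :=
  stmt11_general hn p m hm EQ E hEQ htr hf
end
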